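/- arXiv:2007.00674 — 8 statements merged into one kernel-verified Lean document; each statement's English description precedes it below -/
import Mathlib

section
/- For any Borel probability measures μ, ν on ℝ^d with finite p-th moments (p ∈ [1, ∞)) and any 1 ≤ K ≤ d, the maximum K-sliced p-Wasserstein distance is bounded below by (1/K)^{1/p} times the maximum sliced p-Wasserstein distance: (1/K)^{1/p} · max-SW_p(μ, ν) ≤ max-K-SW_p(μ, ν). -/
open MeasureTheory ENNReal
open scoped RealInnerProductSpace

/-- The p-Wasserstein distance between Borel probability measures on ℝ,
defined as the infimum of transport cost over couplings. -/
noncomputable def Wp (p : ℝ) (μ ν : Measure ℝ) : ℝ≥0∞ :=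
  ⨅ γ ∈ {γ : Measure (ℝ × ℝ) | γ.map Prod.fst = μ ∧ γ.map Prod.snd = ν},
    (∫⁻ q, ENNReal.ofReal (|q.1 - q.2| ^ p) ∂γ) ^ (1 / p)

/-- The sliceMeasure of a measure on ℝ^d along direction θ:
the pushforward under x ↦ ⟨x, θ⟩. -/
noncomputable def sliceMeasure {d : ℕ} (μ : Measure (EuclideanSpace ℝ (Fin d)))
    (θ : EuclideanSpace ℝ (Fin d)) : Measure ℝ :=
  μ.map (fun x => ⟪x, θ⟫)

/-- The maximum K-sliced p-Wasserstein distance: the supremum over orthonormal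
families (θ₁, …, θ_K) of ((1/K) Σ_k W_p(μ_{θ_k}, ν_{θ_k})^p)^{1/p}. -/
noncomputable def maxKSW (p : ℝ) {d : ℕ} (K : ℕ)
    (μ ν : Measure (EuclideanSpace ℝ (Fin d))) : ℝ≥0∞ :=
  ⨆ θ ∈ {θ : Fin K → EuclideanSpace ℝ (Fin d) | Orthonormal ℝ θ},
    (((K : ℝ≥0∞))⁻¹ * ∑ k, (Wp p (sliceMeasure μ (θ k)) (sliceMeasure ν (θ k))) ^ p) ^ (1 / p)

/-- The maximum sliced p-Wasserstein distance: the supremum over unit vectors θ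
of W_p(μ_θ, ν_θ). -/
noncomputable def maxSW (p : ℝ) {d : ℕ}
    (μ ν : Measure (EuclideanSpace ℝ (Fin d))) : ℝ≥0∞ :=
  ⨆ θ ∈ {θ : EuclideanSpace ℝ (Fin d) | ‖θ‖ = 1}, Wp p (sliceMeasure μ θ) (sliceMeasure ν θ)

/-- A measure on ℝ^d has finite p-th moment. -/
def FiniteMoment (p : ℝ) {d : ℕ}
    (μ : Measure (EuclideanSpace ℝ (Fin d))) : Prop :=
  ∫⁻ x, ENNReal.ofReal (‖x‖ ^ p) ∂μ < ⊤

/-! Every unit vector θ is the first vector of some orthonormal K-frame, and in that frame's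
average `K⁻¹ * ∑ k, W_p(μ_{θ_k}, ν_{θ_k})^p` the term of θ alone already gives
`K⁻¹ * W_p(μ_θ, ν_θ)^p`. -/

theorem exists_orthonormal_fin_apply_eq_of_norm_eq_one {𝕜 E : Type*} [RCLike 𝕜]
    [NormedAddCommGroup E] [InnerProductSpace 𝕜 E] [FiniteDimensional 𝕜 E]
    {K : ℕ} (hK : K ≤ Module.finrank 𝕜 E) (i : Fin K) {θ : E} (hθ : ‖θ‖ = 1) :
    ∃ Θ : Fin K → E, Orthonormal 𝕜 Θ ∧ Θ i = θ := by
  have hθ_on : Orthonormal 𝕜 (({Fin.castLE hK i} : Set (Fin _)).domRestrict fun _ => θ) := by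
    rw [orthonormal_iff_ite]
    rintro ⟨j, rfl⟩ ⟨k, rfl⟩
    simp [Set.domRestrict, inner_self_eq_norm_sq_to_K, hθ]
  obtain ⟨b, hb⟩ := hθ_on.exists_orthonormalBasis_extension_of_card_eq (Fintype.card_fin _).symm
  exact ⟨b ∘ Fin.castLE hK, b.orthonormal.comp _ (Fin.castLE_injective hK), hb _ rfl⟩

theorem ENNReal.rpow_one_div_mul_le_rpow_one_div_sum {ι : Type*} [Fintype ι] {p : ℝ}
    (hp : 0 < p) (c : ℝ≥0∞) (f : ι → ℝ≥0∞) (i : ι) :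
    c ^ (1 / p) * f i ≤ (c * ∑ j, f j ^ p) ^ (1 / p) := by
  have hp' : 0 ≤ 1 / p := by positivity
  calc c ^ (1 / p) * f i = (c * f i ^ p) ^ (1 / p) := by
        rw [ENNReal.mul_rpow_of_nonneg _ _ hp', ← ENNReal.rpow_mul, mul_one_div_cancel hp.ne',
          ENNReal.rpow_one]
    _ ≤ (c * ∑ j, f j ^ p) ^ (1 / p) := by
        gcongr
        exact Finset.single_le_sum (f := fun j => f j ^ p) (fun _ _ => zero_le)
          (Finset.mem_univ i)

theorem le_maxKSW {p : ℝ} {d K : ℕ} {μ ν : Measure (EuclideanSpace ℝ (Fin d))}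
    {Θ : Fin K → EuclideanSpace ℝ (Fin d)} (hΘ : Orthonormal ℝ Θ) :
    ((K : ℝ≥0∞)⁻¹ * ∑ k, Wp p (sliceMeasure μ (Θ k)) (sliceMeasure ν (Θ k)) ^ p) ^ (1 / p)
      ≤ maxKSW p K μ ν :=
  le_biSup (fun Θ : Fin K → EuclideanSpace ℝ (Fin d) =>
    ((K : ℝ≥0∞)⁻¹ * ∑ k, Wp p (sliceMeasure μ (Θ k)) (sliceMeasure ν (Θ k)) ^ p) ^ (1 / p)) hΘ

theorem maxKSW_ge_maxSW_general {d K : ℕ} (p : ℝ) (hp : 1 ≤ p) (hK : 1 ≤ K) (hKd : K ≤ d)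
    (μ ν : Measure (EuclideanSpace ℝ (Fin d))) :
    ((K : ℝ≥0∞))⁻¹ ^ (1 / p) * maxSW p μ ν ≤ maxKSW p K μ ν := by
  simp_rw [maxSW, ENNReal.mul_iSup]
  refine iSup₂_le fun θ hθ => ?_
  obtain ⟨Θ, hΘ, hΘθ⟩ := exists_orthonormal_fin_apply_eq_of_norm_eq_one
    (𝕜 := ℝ) (by rwa [finrank_euclideanSpace_fin]) ⟨0, hK⟩ (show ‖θ‖ = 1 from hθ)
  calc (K : ℝ≥0∞)⁻¹ ^ (1 / p) * Wp p (sliceMeasure μ θ) (sliceMeasure ν θ)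
      ≤ ((K : ℝ≥0∞)⁻¹ *
          ∑ k, Wp p (sliceMeasure μ (Θ k)) (sliceMeasure ν (Θ k)) ^ p) ^ (1 / p) := by
        rw [← hΘθ]
        exact ENNReal.rpow_one_div_mul_le_rpow_one_div_sum (by linarith) _
          (fun k => Wp p (sliceMeasure μ (Θ k)) (sliceMeasure ν (Θ k))) _
    _ ≤ maxKSW p K μ ν := le_maxKSW hΘ

/-- The maximum K-sliced p-Wasserstein distance is bounded below by
(1/K)^{1/p} times the maximum sliced p-Wasserstein distance. -/
theorem maxKSW_ge_maxSW {d K : ℕ} (p : ℝ) (hp : 1 ≤ p) (hK : 1 ≤ K) (hKd : K ≤ d)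
    (μ ν : Measure (EuclideanSpace ℝ (Fin d)))
    [IsProbabilityMeasure μ] [IsProbabilityMeasure ν]
    (hμ : FiniteMoment p μ) (hν : FiniteMoment p ν) :
    ((K : ℝ≥0∞))⁻¹ ^ (1 / p) * maxSW p μ ν ≤ maxKSW p K μ ν :=
  maxKSW_ge_maxSW_general p hp hK hKd μ ν
end

section
/- For p ∈ [1, ∞) and 1 ≤ K ≤ d, the maximum K-sliced p-Wasserstein distance is a metric on the set of Borel probability measures on ℝ^d with finite p-th moments: it is nonnegative, symmetric, satisfies the triangle inequality, and max-K-SW_p(μ, ν) = 0 if and only if μ = ν. -/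
open MeasureTheory ENNReal
open scoped RealInnerProductSpace

/-! Each one-dimensional `Wp` is a metric on probability measures on `ℝ`. Symmetry comes from
swapping a coupling; the triangle inequality from gluing two couplings along their common
marginal (disintegrate both over it and take the product of the conditional kernels) followed by
Minkowski's inequality; definiteness from `|e^{itx} - e^{ity}| ≤ |t| |x - y|`, which bounds the
difference of the characteristic functions by `|t| Wp`.

The K-sliced distance inherits symmetry, and the triangle inequality through Minkowski's
inequality for the finite sum over the family. If it vanishes, then, as `K ≤ d`, every unit
vector lies in some orthonormal K-family, so all one-dimensional projections of `μ` and `ν`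
agree, and by Cramér–Wold (injectivity of the characteristic function) `μ = ν`. -/

open ProbabilityTheory

section Gluing

variable {X Y Z : Type*} [MeasurableSpace X] [MeasurableSpace Y] [MeasurableSpace Z]
  [StandardBorelSpace X] [Nonempty X] [StandardBorelSpace Z] [Nonempty Z]

theorem MeasureTheory.Measure.exists_map_eq_of_snd_eq_fst (γ₁ : Measure (X × Y))
    (γ₂ : Measure (Y × Z)) [IsFiniteMeasure γ₁] [IsFiniteMeasure γ₂] (h : γ₁.snd = γ₂.fst) :
    ∃ m : Measure (X × Y × Z), m.map (fun q => (q.1, q.2.1)) = γ₁ ∧ m.map Prod.snd = γ₂ := by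
  set ρ := γ₁.map Prod.swap
  have hρ : ρ.fst = γ₂.fst := by
    rw [← h, Measure.fst, Measure.map_map measurable_fst measurable_swap]; rfl
  set m₀ := γ₂.fst ⊗ₘ (ρ.condKernel ×ₖ γ₂.condKernel)
  have hm₀₁ : m₀.map (Prod.map id Prod.fst) = ρ := by
    rw [← Measure.compProd_map measurable_fst, ← Kernel.fst_eq, Kernel.fst_prod, ← hρ,
      ρ.disintegrate]
  have hm₀₂ : m₀.map (Prod.map id Prod.snd) = γ₂ := by
    rw [← Measure.compProd_map measurable_snd, ← Kernel.snd_eq, Kernel.snd_prod,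
      γ₂.disintegrate]
  refine ⟨m₀.map fun q => (q.2.1, q.1, q.2.2), ?_, ?_⟩
  · calc _ = (m₀.map (Prod.map id Prod.fst)).map Prod.swap := by
          rw [Measure.map_map (by fun_prop) (by fun_prop),
            Measure.map_map (by fun_prop) (by fun_prop)]
          rfl
      _ = γ₁ := by
          rw [hm₀₁, Measure.map_map measurable_swap measurable_swap, Prod.swap_swap_eq,
            Measure.map_id]
  · rw [Measure.map_map (by fun_prop) (by fun_prop), ← hm₀₂]; rfl

end Gluing

theorem lintegral_le_rpow_lintegral_rpow {α : Type*} [MeasurableSpace α] {μ : Measure α}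
    [IsProbabilityMeasure μ] {p : ℝ} (hp : 1 ≤ p) {f : α → ℝ≥0∞} (hf : AEMeasurable f μ) :
    ∫⁻ a, f a ∂μ ≤ (∫⁻ a, f a ^ p ∂μ) ^ (1 / p) := by
  rcases hp.eq_or_lt with rfl | hp
  · simp
  · simpa using ENNReal.lintegral_mul_le_Lp_mul_Lq μ (.conjExponent hp) hf
      (aemeasurable_const (b := 1))

theorem MeasureTheory.Measure.isProbabilityMeasure_of_map_eq {α β : Type*} [MeasurableSpace α]
    [MeasurableSpace β] {μ : Measure α} {ν : Measure β} [IsProbabilityMeasure ν] (f : α → β)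
    (h : μ.map f = ν) : IsProbabilityMeasure μ := by
  subst h
  exact μ.isProbabilityMeasure_of_map f

open Complex in
theorem enorm_exp_mul_I_sub_exp_mul_I_le (x y : ℝ) :
    ‖cexp (x * I) - cexp (y * I)‖ₑ ≤ edist x y := by
  have : cexp (x * I) - cexp (y * I) = cexp (y * I) * (cexp (I * ↑(x - y)) - 1) := by
    rw [mul_sub, mul_one, ← Complex.exp_add]; push_cast; ring_nf
  rw [this, enorm_mul, ← ofReal_norm, norm_exp_ofReal_mul_I, ENNReal.ofReal_one, one_mul,
    edist_dist, Real.dist_eq, ← Real.enorm_eq_ofReal_abs]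
  exact Real.enorm_exp_I_mul_ofReal_sub_one_le

section Wasserstein

variable {p : ℝ} {μ ν : Measure ℝ}

theorem Wp_eq_iInf_edist (hp : 0 ≤ p) (μ ν : Measure ℝ) :
    Wp p μ ν = ⨅ γ ∈ {γ : Measure (ℝ × ℝ) | γ.map Prod.fst = μ ∧ γ.map Prod.snd = ν},
      (∫⁻ q, edist q.1 q.2 ^ p ∂γ) ^ (1 / p) := by
  simp_rw [Wp, edist_dist, Real.dist_eq, ENNReal.ofReal_rpow_of_nonneg (abs_nonneg _) hp]

theorem Wp_le_of_map_eq (hp : 0 ≤ p) {γ : Measure (ℝ × ℝ)} (h₁ : γ.map Prod.fst = μ)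
    (h₂ : γ.map Prod.snd = ν) :
    Wp p μ ν ≤ (∫⁻ q, edist q.1 q.2 ^ p ∂γ) ^ (1 / p) := by
  rw [Wp_eq_iInf_edist hp]
  exact iInf₂_le γ ⟨h₁, h₂⟩

theorem Wp_comm (hp : 0 ≤ p) (μ ν : Measure ℝ) : Wp p μ ν = Wp p ν μ := by
  suffices ∀ μ ν : Measure ℝ, Wp p ν μ ≤ Wp p μ ν from le_antisymm (this ν μ) (this μ ν)
  intro μ ν
  rw [Wp_eq_iInf_edist hp μ ν]
  refine le_iInf₂ fun γ ⟨h₁, h₂⟩ => ?_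
  calc Wp p ν μ ≤ (∫⁻ q, edist q.1 q.2 ^ p ∂(γ.map Prod.swap)) ^ (1 / p) :=
        Wp_le_of_map_eq hp (by rwa [Measure.map_map measurable_fst measurable_swap])
          (by rwa [Measure.map_map measurable_snd measurable_swap])
    _ = (∫⁻ q, edist q.1 q.2 ^ p ∂γ) ^ (1 / p) := by
        rw [lintegral_map (by fun_prop) measurable_swap]
        simp_rw [Prod.fst_swap, Prod.snd_swap, edist_comm]

theorem Wp_self (hp : 0 < p) (μ : Measure ℝ) : Wp p μ μ = 0 := by
  refine le_antisymm ?_ zero_le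
  calc Wp p μ μ ≤ (∫⁻ q, edist q.1 q.2 ^ p ∂(μ.map fun x => (x, x))) ^ (1 / p) :=
        Wp_le_of_map_eq hp.le
          (by rw [Measure.map_map (by fun_prop) (by fun_prop)]; exact Measure.map_id)
          (by rw [Measure.map_map (by fun_prop) (by fun_prop)]; exact Measure.map_id)
    _ = 0 := by
        rw [lintegral_map (by fun_prop) (by fun_prop)]
        simp [hp, ENNReal.zero_rpow_of_pos hp]

theorem Wp_triangle (hp : 1 ≤ p) (μ₁ μ₂ μ₃ : Measure ℝ) [IsProbabilityMeasure μ₁]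
    [IsProbabilityMeasure μ₂] : Wp p μ₁ μ₃ ≤ Wp p μ₁ μ₂ + Wp p μ₂ μ₃ := by
  have hp₀ : 0 ≤ p := zero_le_one.trans hp
  rw [Wp_eq_iInf_edist hp₀ μ₁ μ₂, Wp_eq_iInf_edist hp₀ μ₂ μ₃]
  refine ENNReal.le_iInf₂_add_iInf₂ fun γ₁ ⟨h₁, h₂⟩ γ₂ ⟨h₂', h₃⟩ => ?_
  have := γ₁.isProbabilityMeasure_of_map_eq Prod.fst h₁
  have := γ₂.isProbabilityMeasure_of_map_eq Prod.fst h₂'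
  obtain ⟨m, hm₁, hm₂⟩ := γ₁.exists_map_eq_of_snd_eq_fst γ₂ (h₂.trans h₂'.symm)
  have hΓ₁ : (m.map fun q => (q.1, q.2.2)).map Prod.fst = μ₁ := by
    rw [← h₁, ← hm₁, Measure.map_map measurable_fst (by fun_prop),
      Measure.map_map measurable_fst (by fun_prop)]
    rfl
  have hΓ₃ : (m.map fun q => (q.1, q.2.2)).map Prod.snd = μ₃ := by
    rw [← h₃, ← hm₂, Measure.map_map measurable_snd (by fun_prop),
      Measure.map_map measurable_snd (by fun_prop)]
    rfl
  calc Wp p μ₁ μ₃ ≤ (∫⁻ q, edist q.1 q.2.2 ^ p ∂m) ^ (1 / p) :=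
        (Wp_le_of_map_eq hp₀ hΓ₁ hΓ₃).trans_eq
          (by rw [lintegral_map (by fun_prop) (by fun_prop)])
    _ ≤ (∫⁻ q, (edist q.1 q.2.1 + edist q.2.1 q.2.2) ^ p ∂m) ^ (1 / p) := by
        gcongr with q
        exact edist_triangle _ _ _
    _ ≤ (∫⁻ q, edist q.1 q.2.1 ^ p ∂m) ^ (1 / p) +
          (∫⁻ q, edist q.2.1 q.2.2 ^ p ∂m) ^ (1 / p) :=
        ENNReal.lintegral_Lp_add_le (by fun_prop) (by fun_prop) hp
    _ = (∫⁻ q, edist q.1 q.2 ^ p ∂γ₁) ^ (1 / p) +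
          (∫⁻ q, edist q.1 q.2 ^ p ∂γ₂) ^ (1 / p) := by
        rw [← hm₁, ← hm₂, lintegral_map (by fun_prop) (by fun_prop),
          lintegral_map (by fun_prop) (by fun_prop)]

open Complex in
theorem enorm_charFun_map_fst_sub_le (hp : 1 ≤ p) {γ : Measure (ℝ × ℝ)}
    [IsProbabilityMeasure γ] (t : ℝ) :
    ‖charFun (γ.map Prod.fst) t - charFun (γ.map Prod.snd) t‖ₑ ≤
      ‖t‖ₑ * (∫⁻ q, edist q.1 q.2 ^ p ∂γ) ^ (1 / p) := by
  have hint : ∀ f : ℝ × ℝ → ℝ, Continuous f → Integrable (fun q => cexp (t * f q * I)) γ :=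
    fun f hf => Integrable.of_bound (by fun_prop) 1 (ae_of_all _ fun q => by
      rw [← Complex.ofReal_mul, Complex.norm_exp_ofReal_mul_I])
  rw [charFun_apply_real, charFun_apply_real, integral_map (by fun_prop) (by fun_prop),
    integral_map (by fun_prop) (by fun_prop),
    ← integral_sub (hint _ continuous_fst) (hint _ continuous_snd)]
  calc _ ≤ ∫⁻ q, ‖cexp (t * q.1 * I) - cexp (t * q.2 * I)‖ₑ ∂γ :=
        enorm_integral_le_lintegral_enorm _
    _ ≤ ∫⁻ q, ‖t‖ₑ * edist q.1 q.2 ∂γ := by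
        gcongr with q
        push_cast [← Complex.ofReal_mul]
        refine (enorm_exp_mul_I_sub_exp_mul_I_le _ _).trans_eq ?_
        rw [edist_dist, edist_dist, Real.dist_eq, Real.dist_eq, ← mul_sub, abs_mul,
          ENNReal.ofReal_mul (abs_nonneg _), Real.enorm_eq_ofReal_abs]
    _ ≤ ‖t‖ₑ * (∫⁻ q, edist q.1 q.2 ^ p ∂γ) ^ (1 / p) := by
        rw [lintegral_const_mul _ (by fun_prop)]
        gcongr
        exact lintegral_le_rpow_lintegral_rpow hp (by fun_prop)

theorem enorm_charFun_sub_le_mul_Wp (hp : 1 ≤ p)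
    [IsProbabilityMeasure μ] [IsProbabilityMeasure ν] (t : ℝ) :
    ‖charFun μ t - charFun ν t‖ₑ ≤ ‖t‖ₑ * Wp p μ ν := by
  rcases eq_or_ne t 0 with rfl | ht
  · simp [charFun_zero]
  rw [mul_comm, ← ENNReal.div_le_iff (by simpa) enorm_ne_top, Wp_eq_iInf_edist (by linarith)]
  refine le_iInf₂ fun γ ⟨h₁, h₂⟩ => ?_
  have := γ.isProbabilityMeasure_of_map_eq Prod.fst h₁
  rw [ENNReal.div_le_iff (by simpa) enorm_ne_top, mul_comm, ← h₁, ← h₂]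
  exact enorm_charFun_map_fst_sub_le hp t

theorem eq_of_Wp_eq_zero (hp : 1 ≤ p)
    [IsProbabilityMeasure μ] [IsProbabilityMeasure ν] (h : Wp p μ ν = 0) : μ = ν := by
  refine Measure.ext_of_charFun (funext fun t => ?_)
  have := enorm_charFun_sub_le_mul_Wp hp (μ := μ) (ν := ν) t
  rwa [h, mul_zero, nonpos_iff_eq_zero, enorm_eq_zero, sub_eq_zero] at this

end Wasserstein

section CramerWold

variable {E : Type*} [NormedAddCommGroup E] [InnerProductSpace ℝ E] [MeasurableSpace E]
  [BorelSpace E]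

theorem charFun_smul_eq_charFun_map_inner (μ : Measure E) (r : ℝ) (θ : E) :
    charFun μ (r • θ) = charFun (μ.map (⟪·, θ⟫)) r := by
  rw [charFun_apply, charFun_apply_real, integral_map (by fun_prop) (by fun_prop)]
  simp_rw [inner_smul_right, Complex.ofReal_mul]

theorem MeasureTheory.Measure.ext_of_map_inner_eq [CompleteSpace E] [SecondCountableTopology E]
    {μ ν : Measure E} [IsProbabilityMeasure μ] [IsProbabilityMeasure ν]
    (h : ∀ θ : E, ‖θ‖ = 1 → μ.map (⟪·, θ⟫) = ν.map (⟪·, θ⟫)) : μ = ν := by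
  refine Measure.ext_of_charFun (funext fun t => ?_)
  rcases eq_or_ne t 0 with rfl | ht
  · simp [charFun_zero]
  rw [← smul_inv_smul₀ (norm_ne_zero_iff.2 ht) t, charFun_smul_eq_charFun_map_inner,
    charFun_smul_eq_charFun_map_inner,
    h _ (by rw [norm_smul, norm_inv, norm_norm, inv_mul_cancel₀ (norm_ne_zero_iff.2 ht)])]

end CramerWold

theorem exists_orthonormal_fin_apply_eq {E : Type*} [NormedAddCommGroup E]
    [InnerProductSpace ℝ E] [FiniteDimensional ℝ E] {K : ℕ} (hK : K ≤ Module.finrank ℝ E)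
    (i : Fin K) {θ : E} (hθ : ‖θ‖ = 1) : ∃ f : Fin K → E, Orthonormal ℝ f ∧ f i = θ := by
  have hθ' : Orthonormal ℝ (({Fin.castLE hK i} : Set (Fin _)).domRestrict fun _ => θ) := by
    rw [orthonormal_iff_ite]
    rintro ⟨j, rfl⟩ ⟨k, rfl⟩
    simp [Set.domRestrict_apply, hθ]
  obtain ⟨b, hb⟩ := hθ'.exists_orthonormalBasis_extension_of_card_eq (Fintype.card_fin _).symm
  exact ⟨b ∘ Fin.castLE hK, b.orthonormal.comp _ (Fin.castLE_injective hK), hb _ rfl⟩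

section MaxSliced

variable {p : ℝ} {d K : ℕ}

instance (μ : Measure (EuclideanSpace ℝ (Fin d))) [IsProbabilityMeasure μ]
    (θ : EuclideanSpace ℝ (Fin d)) : IsProbabilityMeasure (sliceMeasure μ θ) :=
  Measure.isProbabilityMeasure_map (by fun_prop)

theorem rpow_le_maxKSW (μ ν : Measure (EuclideanSpace ℝ (Fin d)))
    {θ : Fin K → EuclideanSpace ℝ (Fin d)} (hθ : Orthonormal ℝ θ) :
    (((K : ℝ≥0∞))⁻¹ * ∑ k, (Wp p (sliceMeasure μ (θ k)) (sliceMeasure ν (θ k))) ^ p) ^ (1 / p) ≤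
      maxKSW p K μ ν :=
  le_iSup₂ (f := fun θ (_ : Orthonormal ℝ θ) =>
    (((K : ℝ≥0∞))⁻¹ * ∑ k, (Wp p (sliceMeasure μ (θ k)) (sliceMeasure ν (θ k))) ^ p) ^ (1 / p))
    θ hθ

theorem maxKSW_comm (hp : 0 ≤ p) (μ ν : Measure (EuclideanSpace ℝ (Fin d))) :
    maxKSW p K μ ν = maxKSW p K ν μ := by
  simp_rw [maxKSW, Wp_comm hp]

theorem maxKSW_self (hp : 0 < p) (μ : Measure (EuclideanSpace ℝ (Fin d))) :
    maxKSW p K μ μ = 0 := by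
  simp [maxKSW, Wp_self hp, ENNReal.zero_rpow_of_pos hp, hp]

theorem maxKSW_triangle (hp : 1 ≤ p) (μ₁ μ₂ μ₃ : Measure (EuclideanSpace ℝ (Fin d)))
    [IsProbabilityMeasure μ₁] [IsProbabilityMeasure μ₂] :
    maxKSW p K μ₁ μ₃ ≤ maxKSW p K μ₁ μ₂ + maxKSW p K μ₂ μ₃ := by
  refine iSup₂_le fun θ hθ => ?_
  set W := fun (μ ν : Measure (EuclideanSpace ℝ (Fin d))) (k : Fin K) =>
    Wp p (sliceMeasure μ (θ k)) (sliceMeasure ν (θ k))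
  have hp₀ : 0 ≤ 1 / p := by positivity
  calc ((K : ℝ≥0∞)⁻¹ * ∑ k, W μ₁ μ₃ k ^ p) ^ (1 / p)
      ≤ ((K : ℝ≥0∞)⁻¹ * ∑ k, (W μ₁ μ₂ k + W μ₂ μ₃ k) ^ p) ^ (1 / p) := by
        gcongr with k
        exact Wp_triangle hp _ _ _
    _ = (K : ℝ≥0∞)⁻¹ ^ (1 / p) * (∑ k, (W μ₁ μ₂ k + W μ₂ μ₃ k) ^ p) ^ (1 / p) :=
        ENNReal.mul_rpow_of_nonneg _ _ hp₀
    _ ≤ (K : ℝ≥0∞)⁻¹ ^ (1 / p) *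
          ((∑ k, W μ₁ μ₂ k ^ p) ^ (1 / p) + (∑ k, W μ₂ μ₃ k ^ p) ^ (1 / p)) := by
        gcongr
        exact ENNReal.Lp_add_le _ _ _ hp
    _ = ((K : ℝ≥0∞)⁻¹ * ∑ k, W μ₁ μ₂ k ^ p) ^ (1 / p) +
          ((K : ℝ≥0∞)⁻¹ * ∑ k, W μ₂ μ₃ k ^ p) ^ (1 / p) := by
        rw [mul_add, ENNReal.mul_rpow_of_nonneg _ _ hp₀, ENNReal.mul_rpow_of_nonneg _ _ hp₀]
    _ ≤ maxKSW p K μ₁ μ₂ + maxKSW p K μ₂ μ₃ :=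
        add_le_add (rpow_le_maxKSW _ _ hθ) (rpow_le_maxKSW _ _ hθ)

theorem maxKSW_eq_zero_iff (hp : 1 ≤ p) (hK : 1 ≤ K) (hKd : K ≤ d)
    {μ ν : Measure (EuclideanSpace ℝ (Fin d))} [IsProbabilityMeasure μ]
    [IsProbabilityMeasure ν] : maxKSW p K μ ν = 0 ↔ μ = ν := by
  have hp₀ : 0 < p := zero_lt_one.trans_le hp
  refine ⟨fun h => Measure.ext_of_map_inner_eq fun θ hθ => ?_, fun h => h ▸ maxKSW_self hp₀ μ⟩
  obtain ⟨f, hf, rfl⟩ := exists_orthonormal_fin_apply_eq (by simpa using hKd) ⟨0, hK⟩ hθ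
  have hzero := (rpow_le_maxKSW μ ν hf).trans h.le
  simp only [nonpos_iff_eq_zero, ENNReal.rpow_eq_zero_iff_of_pos (one_div_pos.2 hp₀),
    mul_eq_zero, ENNReal.inv_eq_zero, ENNReal.natCast_ne_top, false_or, Finset.sum_eq_zero_iff,
    Finset.mem_univ, true_implies, ENNReal.rpow_eq_zero_iff_of_pos hp₀] at hzero
  exact eq_of_Wp_eq_zero (μ := sliceMeasure μ _) (ν := sliceMeasure ν _) hp (hzero _)

end MaxSliced

/-- The maximum K-sliced p-Wasserstein distance is a metric on the
Borel probability measures on ℝ^d with finite p-th moments: nonnegative,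
symmetric, triangle inequality, and identity of indiscernibles. -/
theorem maxKSW_isMetric {d K : ℕ} (p : ℝ) (hp : 1 ≤ p) (hK : 1 ≤ K) (hKd : K ≤ d) :
    (∀ μ ν : Measure (EuclideanSpace ℝ (Fin d)),
      IsProbabilityMeasure μ → IsProbabilityMeasure ν →
      FiniteMoment p μ → FiniteMoment p ν →
      0 ≤ maxKSW p K μ ν) ∧
    (∀ μ ν : Measure (EuclideanSpace ℝ (Fin d)),
      IsProbabilityMeasure μ → IsProbabilityMeasure ν →
      FiniteMoment p μ → FiniteMoment p ν →
      maxKSW p K μ ν = maxKSW p K ν μ) ∧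
    (∀ μ₁ μ₂ μ₃ : Measure (EuclideanSpace ℝ (Fin d)),
      IsProbabilityMeasure μ₁ → IsProbabilityMeasure μ₂ → IsProbabilityMeasure μ₃ →
      FiniteMoment p μ₁ → FiniteMoment p μ₂ → FiniteMoment p μ₃ →
      maxKSW p K μ₁ μ₃ ≤ maxKSW p K μ₁ μ₂ + maxKSW p K μ₂ μ₃) ∧
    (∀ μ ν : Measure (EuclideanSpace ℝ (Fin d)),
      IsProbabilityMeasure μ → IsProbabilityMeasure ν →
      FiniteMoment p μ → FiniteMoment p ν →
      (maxKSW p K μ ν = 0 ↔ μ = ν)) :=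
  ⟨fun _ _ _ _ _ _ => zero_le,
    fun μ ν _ _ _ _ => maxKSW_comm (by linarith) μ ν,
    fun μ₁ μ₂ μ₃ _ _ _ _ _ _ => maxKSW_triangle hp μ₁ μ₂ μ₃,
    fun _ _ _ _ _ _ => maxKSW_eq_zero_iff hp hK hKd⟩
end

section
/- Let 1 ≤ K ≤ d, let A ∈ ℝ^{d×K} satisfy AᵀA = I_K, and let Ψ₁, …, Ψ_K : ℝ → ℝ be differentiable functions. Define T : ℝ^d → ℝ^d by T(x) = A·Ψ(Aᵀx) + x − AAᵀx, where Ψ : ℝ^K → ℝ^K acts componentwise as Ψ(v) = (Ψ₁(v₁), …, Ψ_K(v_K)). Then T is differentiable on ℝ^d and the determinant of its derivative at any x ∈ ℝ^d equals ∏_{k=1}^K Ψ_k'((Aᵀx)_k). -/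
/-!
By the chain rule the derivative at `x` is the matrix `A D Aᵀ + 1 - A Aᵀ = 1 + A (D - 1) Aᵀ`
with `D = diag (Ψ_k' ((Aᵀx)_k))`. Sylvester's identity `det (1 + B C) = det (1 + C B)` moves the
determinant to `K × K` matrices, where `Aᵀ A = 1` collapses `1 + (D - 1) Aᵀ A` to `D`.
-/

open Matrix

theorem hasFDerivAt_piMap_diagonal {𝕜 ι : Type*} [NontriviallyNormedField 𝕜]
    [CompleteSpace 𝕜] [Fintype ι] [DecidableEq ι] {f : ι → 𝕜 → 𝕜} {v : ι → 𝕜} (hf : ∀ i, DifferentiableAt 𝕜 (f i) (v i)) :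
    HasFDerivAt (fun w : ι → 𝕜 => fun i => f i (w i))
      (toLin' (diagonal fun i => deriv (f i) (v i))).toContinuousLinearMap v := by
  rw [hasFDerivAt_pi']
  intro i
  refine ((hf i).hasDerivAt.comp_hasFDerivAt v (hasFDerivAt_apply i v)).congr_fderiv ?_
  ext w
  simp [mulVec_diagonal, mul_comm]

theorem Matrix.hasFDerivAt_mulVec {𝕜 m n : Type*} [NontriviallyNormedField 𝕜] [CompleteSpace 𝕜]
    [Fintype m] [Fintype n] [DecidableEq n] (M : Matrix m n 𝕜) (x : n → 𝕜) :
    HasFDerivAt (fun y => M *ᵥ y) (toLin' M).toContinuousLinearMap x :=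
  (toLin' M).toContinuousLinearMap.hasFDerivAt

theorem Matrix.det_mul_diagonal_mul_transpose_add_one_sub {m n R : Type*} [Fintype m]
    [DecidableEq m] [Fintype n] [DecidableEq n] [CommRing R]
    {A : Matrix m n R} (hA : Aᵀ * A = 1) (D : Matrix n n R) :
    (A * D * Aᵀ + 1 - A * Aᵀ).det = D.det := by
  have hrewrite : A * D * Aᵀ + 1 - A * Aᵀ = 1 + A * (D - 1) * Aᵀ := by
    rw [Matrix.mul_sub, Matrix.mul_one, Matrix.sub_mul]
    abel
  rw [hrewrite, det_one_add_mul_comm, ← Matrix.mul_assoc, hA, Matrix.one_mul, add_sub_cancel]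

theorem sinf_jacobian_det_general (d K : ℕ)
    (A : Matrix (Fin d) (Fin K) ℝ) (hA : Aᵀ * A = 1)
    (Ψ : Fin K → ℝ → ℝ) (hΨ : ∀ k, Differentiable ℝ (Ψ k)) :
    Differentiable ℝ (fun x : Fin d → ℝ =>
        A.mulVec (fun k => Ψ k (Aᵀ.mulVec x k)) + x - A.mulVec (Aᵀ.mulVec x)) ∧
    ∀ x : Fin d → ℝ,
      LinearMap.det
        ((fderiv ℝ (fun x : Fin d → ℝ =>
            A.mulVec (fun k => Ψ k (Aᵀ.mulVec x k)) + x - A.mulVec (Aᵀ.mulVec x)) x)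
          : (Fin d → ℝ) →ₗ[ℝ] (Fin d → ℝ))
        = ∏ k : Fin K, deriv (Ψ k) (Aᵀ.mulVec x k) := by
  set D : (Fin d → ℝ) → Matrix (Fin K) (Fin K) ℝ :=
    fun x => diagonal fun k => deriv (Ψ k) (Aᵀ.mulVec x k)
  have hderiv : ∀ x, HasFDerivAt
      (fun x : Fin d → ℝ => A.mulVec (fun k => Ψ k (Aᵀ.mulVec x k)) + x - A.mulVec (Aᵀ.mulVec x))
      (toLin' (A * D x * Aᵀ + 1 - A * Aᵀ)).toContinuousLinearMap x := by
    intro x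
    have hΨA := (A.hasFDerivAt_mulVec _).comp x
      ((hasFDerivAt_piMap_diagonal fun k => hΨ k _).comp x (Aᵀ.hasFDerivAt_mulVec x))
    have hAAt := (A.hasFDerivAt_mulVec _).comp x (Aᵀ.hasFDerivAt_mulVec x)
    refine ((hΨA.add (hasFDerivAt_id x)).sub hAAt).congr_fderiv ?_
    ext v
    simp [mulVec_mulVec, D]
  refine ⟨fun x => (hderiv x).differentiableAt, fun x => ?_⟩
  rw [(hderiv x).fderiv, LinearMap.coe_toContinuousLinearMap, LinearMap.det_toLin',
    det_mul_diagonal_mul_transpose_add_one_sub hA, det_diagonal]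

/-- The SINF iteration T(x) = A·Ψ(Aᵀx) + x − AAᵀx, with A having
orthonormal columns and differentiable 1D maps Ψ₁, …, Ψ_K, is differentiable and
its Jacobian determinant at x equals ∏_{k=1}^K Ψ_k'((Aᵀx)_k). -/
theorem sinf_jacobian_det (d K : ℕ) (hK : 1 ≤ K) (hKd : K ≤ d)
    (A : Matrix (Fin d) (Fin K) ℝ) (hA : Aᵀ * A = 1)
    (Ψ : Fin K → ℝ → ℝ) (hΨ : ∀ k, Differentiable ℝ (Ψ k)) :
    Differentiable ℝ (fun x : Fin d → ℝ =>
        A.mulVec (fun k => Ψ k (Aᵀ.mulVec x k)) + x - A.mulVec (Aᵀ.mulVec x)) ∧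
    ∀ x : Fin d → ℝ,
      LinearMap.det
        ((fderiv ℝ (fun x : Fin d → ℝ =>
            A.mulVec (fun k => Ψ k (Aᵀ.mulVec x k)) + x - A.mulVec (Aᵀ.mulVec x)) x)
          : (Fin d → ℝ) →ₗ[ℝ] (Fin d → ℝ))
        = ∏ k : Fin K, deriv (Ψ k) (Aᵀ.mulVec x k) :=
  sinf_jacobian_det_general d K A hA Ψ hΨ
end

section
/- Let d, m, K ≥ 1, let U, V ∈ ℝ^{d×m}, let A ∈ ℝ^{d×K}, and let τ ∈ ℝ be such that I_d + (τ/2)UVᵀ and I_m + (τ/2)VᵀU are both invertible. Then (I_d + (τ/2)UVᵀ)^{-1}(I_d − (τ/2)UVᵀ)A = A − τ·U·(I_m + (τ/2)VᵀU)^{-1}·Vᵀ·A. -/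
/-!
Put `B = (τ/2) U Vᵀ`. Since `1 - B = (1 + B) - 2B`, the Cayley factor is
`(1 + B)⁻¹ (1 - B) = 1 - 2 (1 + B)⁻¹ B`, and the push-through identity
`(1 + U Y)⁻¹ U = U (1 + Y U)⁻¹` (from `(1 + U Y) U = U (1 + Y U)`) with `Y = (τ/2) Vᵀ`
moves the `d × d` inverse to the `m × m` one.
-/

open Matrix

namespace Matrix

variable {m n R : Type*} [Fintype m] [Fintype n] [DecidableEq m] [DecidableEq n] [CommRing R]

theorem one_add_mul_mul_eq_mul_one_add_mul (X : Matrix n m R) (Y : Matrix m n R) :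
    (1 + X * Y) * X = X * (1 + Y * X) := by
  rw [Matrix.add_mul, Matrix.mul_add, Matrix.one_mul, Matrix.mul_one, Matrix.mul_assoc]

/-- This also holds when `1 + X * Y` is singular: then so is `1 + Y * X` (Weinstein–Aronszajn),
and both inverses are `0`. -/
theorem inv_one_add_mul_mul_eq_mul_inv_one_add_mul (X : Matrix n m R) (Y : Matrix m n R) :
    (1 + X * Y)⁻¹ * X = X * (1 + Y * X)⁻¹ := by
  by_cases h : IsUnit (1 + X * Y).det
  · have h' : IsUnit (1 + Y * X).det := det_one_add_mul_comm X Y ▸ h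
    calc (1 + X * Y)⁻¹ * X = (1 + X * Y)⁻¹ * ((1 + X * Y) * X * (1 + Y * X)⁻¹) := by
          rw [one_add_mul_mul_eq_mul_one_add_mul, Matrix.mul_assoc, mul_nonsing_inv _ h',
            Matrix.mul_one]
      _ = X * (1 + Y * X)⁻¹ := by
          rw [← Matrix.mul_assoc, ← Matrix.mul_assoc, nonsing_inv_mul _ h, Matrix.one_mul]
  · have h' : ¬IsUnit (1 + Y * X).det := det_one_add_mul_comm X Y ▸ h
    rw [nonsing_inv_apply_not_isUnit _ h, nonsing_inv_apply_not_isUnit _ h', Matrix.zero_mul,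
      Matrix.mul_zero]

theorem inv_one_add_mul_one_sub {B : Matrix n n R} (h : IsUnit (1 + B)) :
    (1 + B)⁻¹ * (1 - B) = 1 - 2 • ((1 + B)⁻¹ * B) := by
  have hdet := (isUnit_iff_isUnit_det _).mp h
  calc (1 + B)⁻¹ * (1 - B) = (1 + B)⁻¹ * ((1 + B) - 2 • B) := by congr 1; module
    _ = 1 - 2 • ((1 + B)⁻¹ * B) := by
      rw [Matrix.mul_sub, nonsing_inv_mul _ hdet, Matrix.mul_smul]

end Matrix

theorem cayley_woodbury_general (d m K : ℕ)
    (U V : Matrix (Fin d) (Fin m) ℝ) (A : Matrix (Fin d) (Fin K) ℝ) (τ : ℝ)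
    (h1 : IsUnit ((1 : Matrix (Fin d) (Fin d) ℝ) + (τ / 2) • (U * Vᵀ))) :
    ((1 : Matrix (Fin d) (Fin d) ℝ) + (τ / 2) • (U * Vᵀ))⁻¹
        * ((1 : Matrix (Fin d) (Fin d) ℝ) - (τ / 2) • (U * Vᵀ)) * A
      = A - τ • (U * ((1 : Matrix (Fin m) (Fin m) ℝ) + (τ / 2) • (Vᵀ * U))⁻¹
          * (Vᵀ * A)) := by
  have push : ((1 : Matrix (Fin d) (Fin d) ℝ) + (τ / 2) • (U * Vᵀ))⁻¹ * U
      = U * ((1 : Matrix (Fin m) (Fin m) ℝ) + (τ / 2) • (Vᵀ * U))⁻¹ := by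
    simpa only [Matrix.mul_smul, Matrix.smul_mul] using
      inv_one_add_mul_mul_eq_mul_inv_one_add_mul U ((τ / 2) • Vᵀ)
  rw [inv_one_add_mul_one_sub h1, Matrix.mul_smul, ← Matrix.mul_assoc, push, Matrix.sub_mul,
    Matrix.one_mul, Matrix.smul_mul, Matrix.smul_mul, Matrix.mul_assoc _ Vᵀ A]
  module

/-- Sherman–Morrison–Woodbury form of the Cayley-transform
update: with B = UVᵀ, one has
(I_d + (τ/2)UVᵀ)⁻¹ (I_d − (τ/2)UVᵀ) A = A − τ·U·(I_m + (τ/2)VᵀU)⁻¹·Vᵀ·A,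
provided both I_d + (τ/2)UVᵀ and I_m + (τ/2)VᵀU are invertible. -/
theorem cayley_woodbury (d m K : ℕ) (hd : 1 ≤ d) (hm : 1 ≤ m) (hK : 1 ≤ K)
    (U V : Matrix (Fin d) (Fin m) ℝ) (A : Matrix (Fin d) (Fin K) ℝ) (τ : ℝ)
    (h1 : IsUnit ((1 : Matrix (Fin d) (Fin d) ℝ) + (τ / 2) • (U * Vᵀ)))
    (h2 : IsUnit ((1 : Matrix (Fin m) (Fin m) ℝ) + (τ / 2) • (Vᵀ * U))) :
    ((1 : Matrix (Fin d) (Fin d) ℝ) + (τ / 2) • (U * Vᵀ))⁻¹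
        * ((1 : Matrix (Fin d) (Fin d) ℝ) - (τ / 2) • (U * Vᵀ)) * A
      = A - τ • (U * ((1 : Matrix (Fin m) (Fin m) ℝ) + (τ / 2) • (Vᵀ * U))⁻¹
          * (Vᵀ * A)) :=
  cayley_woodbury_general d m K U V A τ h1
end

section
/- Let μ and ν be Borel probability measures on ℝ, with μ atomless. Let G(x) = μ((−∞, x]) be the CDF of μ, let F(x) = ν((−∞, x]) be the CDF of ν, and define the quantile function F^{-1}(t) = inf{x ∈ ℝ : F(x) ≥ t} for t ∈ (0, 1). Then the pushforward of μ under the map Ψ = F^{-1} ∘ G equals ν. -/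
open MeasureTheory

/-- The cumulative distribution function of a measure on ℝ: F(x) = μ((−∞, x]). -/
noncomputable def mCDF (μ : Measure ℝ) (x : ℝ) : ℝ := (μ (Set.Iic x)).toReal

/-- The quantile function of a measure on ℝ: F⁻¹(t) = inf {x : F(x) ≥ t}. -/
noncomputable def mQuantile (μ : Measure ℝ) (t : ℝ) : ℝ :=
  sInf {x : ℝ | t ≤ mCDF μ x}

/-!
The quantile function and the cdf form a Galois connection on `(0, 1)`:
`F⁻¹(t) ≤ y ↔ t ≤ F(y)`. Hence `F⁻¹` pushes the uniform measure on `(0, 1)` forward to `ν`,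
since both give `(−∞, y]` the mass `F(y)`. For atomless `μ` the cdf `G` is continuous, so
`G(F_μ⁻¹(s)) = s` and `{G < s} = (−∞, F_μ⁻¹(s))` has mass `s`: `G` pushes `μ` forward to the
uniform measure on `(0, 1)` (probability integral transform). Composing the two push-forwards
gives the theorem.
-/

open ProbabilityTheory Set Filter Topology

lemma StieltjesFunction.csInf_le_iff {R : Type*} [ConditionallyCompleteLinearOrder R]
    [TopologicalSpace R] [OrderTopology R] (f : StieltjesFunction R) {t : ℝ} {y : R}
    (hne : {x | t ≤ f x}.Nonempty) (hbdd : BddBelow {x | t ≤ f x}) :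
    sInf {x | t ≤ f x} ≤ y ↔ t ≤ f y := by
  have hinf : t ≤ f (sInf {x | t ≤ f x}) :=
    ContinuousWithinAt.closure_le (csInf_mem_closure hne hbdd) continuousWithinAt_const
      ((f.right_continuous _).mono fun _ hx => csInf_le hbdd hx) fun _ hx => hx
  exact ⟨fun h => hinf.trans (f.mono h), fun h => csInf_le hbdd h⟩

lemma mCDF_eq_cdf (μ : Measure ℝ) [IsProbabilityMeasure μ] : mCDF μ = cdf μ :=
  funext fun x => (cdf_eq_real μ x).symm

lemma mQuantile_le_iff (ν : Measure ℝ) [IsProbabilityMeasure ν] {t y : ℝ} (ht : t ∈ Ioo 0 1) :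
    mQuantile ν t ≤ y ↔ t ≤ cdf ν y := by
  rw [mQuantile, mCDF_eq_cdf]
  refine (cdf ν).csInf_le_iff ?_ ?_
  · exact ((tendsto_cdf_atTop ν).eventually (lt_mem_nhds ht.2)).exists.imp fun _ hx => hx.le
  · obtain ⟨x₀, hx₀⟩ := ((tendsto_cdf_atBot ν).eventually (gt_mem_nhds ht.1)).exists
    exact ⟨x₀, fun x hx => not_lt.1 fun hlt => (hx.trans (monotone_cdf ν hlt.le)).not_gt hx₀⟩

lemma monotoneOn_mQuantile (ν : Measure ℝ) [IsProbabilityMeasure ν] :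
    MonotoneOn (mQuantile ν) (Ioo 0 1) := fun _ hs _ ht hst =>
  (mQuantile_le_iff ν hs).2 (hst.trans ((mQuantile_le_iff ν ht).1 le_rfl))

lemma aemeasurable_mQuantile_restrict_Ioo (ν : Measure ℝ) [IsProbabilityMeasure ν] :
    AEMeasurable (mQuantile ν) (volume.restrict (Ioo 0 1)) :=
  aemeasurable_restrict_of_monotoneOn measurableSet_Ioo (monotoneOn_mQuantile ν)

lemma leftLim_cdf (μ : Measure ℝ) [IsProbabilityMeasure μ] [NullSingletonClass μ] (x : ℝ) :
    Function.leftLim (cdf μ) x = cdf μ x := by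
  have h := (cdf μ).measure_singleton x
  rw [measure_cdf, measure_singleton, eq_comm, ENNReal.ofReal_eq_zero] at h
  linarith [(monotone_cdf μ).leftLim_le (le_refl x)]

lemma cdf_mQuantile (μ : Measure ℝ) [IsProbabilityMeasure μ] [NullSingletonClass μ] {s : ℝ}
    (hs : s ∈ Ioo 0 1) : cdf μ (mQuantile μ s) = s := by
  refine le_antisymm ?_ ((mQuantile_le_iff μ hs).1 le_rfl)
  rw [← leftLim_cdf]
  refine le_of_tendsto ((monotone_cdf μ).tendsto_leftLim _) ?_
  filter_upwards [self_mem_nhdsWithin] with x hx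
  exact (not_le.1 fun h => (not_le.2 hx) ((mQuantile_le_iff μ hs).2 h)).le

lemma measure_cdf_lt (μ : Measure ℝ) [IsProbabilityMeasure μ] [NullSingletonClass μ] {s : ℝ}
    (hs : s ∈ Ioo 0 1) : μ {x | cdf μ x < s} = ENNReal.ofReal s := by
  have hset : {x | cdf μ x < s} = Iio (mQuantile μ s) := by
    ext x
    rw [mem_Iio, ← not_le, mQuantile_le_iff μ hs, not_le]
    rfl
  rw [hset, measure_congr Iio_ae_eq_Iic, ← ofReal_cdf, cdf_mQuantile μ hs]

lemma measure_cdf_le (μ : Measure ℝ) [IsProbabilityMeasure μ] [NullSingletonClass μ] {s : ℝ}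
    (hs : s ∈ Ico 0 1) : μ {x | cdf μ x ≤ s} = ENNReal.ofReal s := by
  refine le_antisymm ?_ ?_
  · refine ge_of_tendsto ((ENNReal.continuous_ofReal.tendsto s).mono_left
      (nhdsWithin_le_nhds (s := Ioi s))) ?_
    filter_upwards [Ioo_mem_nhdsGT hs.2] with r hr
    rw [← measure_cdf_lt μ ⟨hs.1.trans_lt hr.1, hr.2⟩]
    exact measure_mono fun x hx => lt_of_le_of_lt hx hr.1
  · rcases hs.1.eq_or_lt with rfl | hpos
    · simp
    rw [← measure_cdf_lt μ ⟨hpos, hs.2⟩]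
    exact measure_mono fun x (hx : cdf μ x < s) => hx.le

lemma volume_Iic_inter_Ioo_zero_one {s : ℝ} (hs : s ∈ Icc 0 1) :
    volume (Iic s ∩ Ioo 0 1) = ENNReal.ofReal s := by
  refine le_antisymm ?_ ?_
  · calc volume (Iic s ∩ Ioo 0 1) ≤ volume (Ioc 0 s) := measure_mono fun x hx => ⟨hx.2.1, hx.1⟩
      _ = ENNReal.ofReal s := by rw [Real.volume_Ioc, sub_zero]
  · calc ENNReal.ofReal s = volume (Ioo 0 s) := by rw [Real.volume_Ioo, sub_zero]
      _ ≤ volume (Iic s ∩ Ioo 0 1) :=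
        measure_mono fun x hx => ⟨hx.2.le, hx.1, hx.2.trans_le hs.2⟩

theorem map_cdf_eq_restrict_Ioo (μ : Measure ℝ) [IsProbabilityMeasure μ] [NullSingletonClass μ] :
    μ.map (cdf μ) = volume.restrict (Ioo 0 1) := by
  refine Measure.ext_of_Iic _ _ fun s => ?_
  rw [Measure.map_apply (monotone_cdf μ).measurable measurableSet_Iic,
    Measure.restrict_apply measurableSet_Iic]
  rcases lt_or_ge s 0 with hs0 | hs0
  · have hpre : cdf μ ⁻¹' Iic s = ∅ :=
      eq_empty_of_forall_notMem fun x hx => (cdf_nonneg μ x).not_gt ((mem_Iic.1 hx).trans_lt hs0)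
    have hinter : Iic s ∩ Ioo 0 1 = ∅ :=
      eq_empty_of_forall_notMem fun x hx => hx.2.1.not_ge (hx.1.trans hs0.le)
    rw [hpre, hinter, measure_empty, measure_empty]
  rcases lt_or_ge s 1 with hs1 | hs1
  · exact (measure_cdf_le μ ⟨hs0, hs1⟩).trans (volume_Iic_inter_Ioo_zero_one ⟨hs0, hs1.le⟩).symm
  · have hpre : cdf μ ⁻¹' Iic s = univ :=
      eq_univ_of_forall fun x => (cdf_le_one μ x).trans hs1
    have hinter : Iic s ∩ Ioo 0 1 = Ioo 0 1 :=
      inter_eq_right.2 fun x hx => hx.2.le.trans hs1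
    rw [hpre, hinter, measure_univ, Real.volume_Ioo]
    norm_num

theorem map_mQuantile_restrict_Ioo (ν : Measure ℝ) [IsProbabilityMeasure ν] :
    (volume.restrict (Ioo 0 1)).map (mQuantile ν) = ν := by
  refine (Measure.ext_of_Iic ν _ fun y => ?_).symm
  have hpre : mQuantile ν ⁻¹' Iic y ∩ Ioo 0 1 = Iic (cdf ν y) ∩ Ioo 0 1 :=
    Set.ext fun t => and_congr_left fun ht => mQuantile_le_iff ν ht
  rw [Measure.map_apply_of_aemeasurable (aemeasurable_mQuantile_restrict_Ioo ν)
      measurableSet_Iic,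
    Measure.restrict_apply' measurableSet_Ioo, hpre,
    volume_Iic_inter_Ioo_zero_one ⟨cdf_nonneg ν y, cdf_le_one ν y⟩, ofReal_cdf]

/-- For Borel probability measures μ, ν on ℝ with μ atomless, the
pushforward of μ under the 1D optimal transport map Ψ = F⁻¹ ∘ G (where G is the
CDF of μ and F⁻¹ is the quantile function of ν) equals ν. -/
theorem map_quantile_comp_cdf (μ ν : Measure ℝ)
    [IsProbabilityMeasure μ] [IsProbabilityMeasure ν] [NullSingletonClass μ] :
    μ.map (fun x => mQuantile ν (mCDF μ x)) = ν := by
  have hQ : AEMeasurable (mQuantile ν) (μ.map (cdf μ)) := by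
    rw [map_cdf_eq_restrict_Ioo]
    exact aemeasurable_mQuantile_restrict_Ioo ν
  rw [mCDF_eq_cdf, ← Function.comp_def,
    ← hQ.map_map_of_aemeasurable (monotone_cdf μ).measurable.aemeasurable,
    map_cdf_eq_restrict_Ioo, map_mQuantile_restrict_Ioo]
end

section
/- Let x_m < x_{m+1} and y_m < y_{m+1} be real numbers and let y_m' > 0 and y_{m+1}' > 0. Set s = (y_{m+1} − y_m)/(x_{m+1} − x_m) and σ = y_{m+1}' + y_m' − 2s. Then for every ξ ∈ [0, 1], the denominator of the rational quadratic spline is strictly positive: s + σ·ξ(1−ξ) > 0. -/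
/-! With t = ξ(1 − ξ) ∈ [0, 1/4], the denominator regroups as s(1 − 2t) + (y_m' + y_{m+1}')t,
a positive term plus a nonnegative one. -/

section

variable {K : Type*} [Field K] [LinearOrder K] [IsStrictOrderedRing K]

theorem mul_one_sub_self_le_quarter (ξ : K) : ξ * (1 - ξ) ≤ 1 / 4 := by
  nlinarith [sq_nonneg (2 * ξ - 1)]

theorem add_sub_two_mul_mul_pos {s a t : K} (hs : 0 < s) (ha : 0 ≤ a) (ht₀ : 0 ≤ t)
    (ht : t < 1 / 2) : 0 < s + (a - 2 * s) * t := by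
  have hregroup : s + (a - 2 * s) * t = s * (1 - 2 * t) + a * t := by ring
  rw [hregroup]
  exact add_pos_of_pos_of_nonneg (mul_pos hs (by linarith)) (mul_nonneg ha ht₀)

end

/-- The denominator of the monotonic rational quadratic spline is
strictly positive on the bin: with s = (y_{m+1} − y_m)/(x_{m+1} − x_m) and
σ = y_{m+1}' + y_m' − 2s, one has s + σ·ξ(1−ξ) > 0 for all ξ ∈ [0, 1]. -/
theorem rqs_denominator_pos (xm xm1 ym ym1 dm dm1 : ℝ)
    (hx : xm < xm1) (hy : ym < ym1) (hdm : 0 < dm) (hdm1 : 0 < dm1) :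
    ∀ ξ ∈ Set.Icc (0 : ℝ) 1,
      0 < (ym1 - ym) / (xm1 - xm)
          + (dm1 + dm - 2 * ((ym1 - ym) / (xm1 - xm))) * (ξ * (1 - ξ)) := by
  rintro ξ ⟨hξ₀, hξ₁⟩
  have hs : 0 < (ym1 - ym) / (xm1 - xm) := div_pos (sub_pos.2 hy) (sub_pos.2 hx)
  exact add_sub_two_mul_mul_pos hs (add_pos hdm1 hdm).le (mul_nonneg hξ₀ (sub_nonneg.2 hξ₁))
    ((mul_one_sub_self_le_quarter ξ).trans_lt (by norm_num))
end

section
/- Let x_m < x_{m+1} and y_m < y_{m+1} be real numbers and let y_m' > 0 and y_{m+1}' > 0. Set s = (y_{m+1} − y_m)/(x_{m+1} − x_m) and σ = y_{m+1}' + y_m' − 2s, and for x ∈ [x_m, x_{m+1}] set ξ = (x − x_m)/(x_{m+1} − x_m). Then the rational quadratic spline f(x) = y_m + (y_{m+1} − y_m)·(s·ξ² + y_m'·ξ(1−ξ))/(s + σ·ξ(1−ξ)) is differentiable at each x ∈ (x_m, x_{m+1}) with derivative f'(x) = s²·(y_{m+1}'·ξ² + 2s·ξ(1−ξ) + y_m'·(1−ξ)²)/(s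 + σ·ξ(1−ξ))². -/
/-! On the unit bin the spline is `u ↦ (s u² + d₀ u(1-u)) / (s + σ u(1-u))`, whose derivative
follows from the quotient rule; the general bin is its image under the affine maps
`t ↦ (t - x_m)/(x_{m+1} - x_m)` and `v ↦ y_m + (y_{m+1} - y_m) v`, whose slopes combine to the
extra factor `s`. The denominator is positive on `[0, 1]` because it equals
`s (u² + (1-u)²) + (d₀ + d₁) u (1-u)`. -/

theorem rqs_denominator_pos_s16 {s d₀ d₁ u : ℝ} (hs : 0 < s) (hd₀ : 0 ≤ d₀) (hd₁ : 0 ≤ d₁)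
    (hu₀ : 0 ≤ u) (hu₁ : u ≤ 1) :
    0 < s + (d₁ + d₀ - 2 * s) * (u * (1 - u)) := by
  have hsq : 0 < u ^ 2 + (1 - u) ^ 2 := by nlinarith
  have hprod : 0 ≤ u * (1 - u) := mul_nonneg hu₀ (sub_nonneg.mpr hu₁)
  calc 0 < s * (u ^ 2 + (1 - u) ^ 2) + (d₀ + d₁) * (u * (1 - u)) := by positivity
    _ = s + (d₁ + d₀ - 2 * s) * (u * (1 - u)) := by ring

theorem hasDerivAt_rqs_unit {s d₀ d₁ u : ℝ} (hD : s + (d₁ + d₀ - 2 * s) * (u * (1 - u)) ≠ 0) :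
    HasDerivAt
      (fun v : ℝ => (s * v ^ 2 + d₀ * (v * (1 - v))) / (s + (d₁ + d₀ - 2 * s) * (v * (1 - v))))
      (s * (d₁ * u ^ 2 + 2 * s * (u * (1 - u)) + d₀ * (1 - u) ^ 2)
        / (s + (d₁ + d₀ - 2 * s) * (u * (1 - u))) ^ 2) u := by
  have hpoly : HasDerivAt (fun v : ℝ => v * (1 - v)) (1 * (1 - u) + u * (0 - 1)) u :=
    (hasDerivAt_id u).mul ((hasDerivAt_const u 1).sub (hasDerivAt_id u))
  have hnum := ((hasDerivAt_pow 2 u).const_mul s).fun_add (hpoly.const_mul d₀)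
  have hden := (hpoly.const_mul (d₁ + d₀ - 2 * s)).const_add s
  refine (hnum.div hden hD).congr_deriv ?_
  field_simp
  ring

/-- The monotonic rational quadratic spline
f(x) = y_m + (y_{m+1} − y_m)·(s·ξ² + y_m'·ξ(1−ξ))/(s + σ·ξ(1−ξ)), with
s = (y_{m+1} − y_m)/(x_{m+1} − x_m), σ = y_{m+1}' + y_m' − 2s and
ξ = (x − x_m)/(x_{m+1} − x_m), is differentiable at each x ∈ (x_m, x_{m+1}) with
derivative f'(x) = s²·(y_{m+1}'·ξ² + 2s·ξ(1−ξ) + y_m'·(1−ξ)²)/(s + σ·ξ(1−ξ))². -/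
theorem rqs_hasDerivAt (xm xm1 ym ym1 dm dm1 : ℝ)
    (hx : xm < xm1) (hy : ym < ym1) (hdm : 0 < dm) (hdm1 : 0 < dm1) :
    ∀ x ∈ Set.Ioo xm xm1,
      HasDerivAt
        (fun t : ℝ =>
          ym + (ym1 - ym)
            * (((ym1 - ym) / (xm1 - xm)) * ((t - xm) / (xm1 - xm)) ^ 2
                + dm * (((t - xm) / (xm1 - xm)) * (1 - (t - xm) / (xm1 - xm))))
            / ((ym1 - ym) / (xm1 - xm)
                + (dm1 + dm - 2 * ((ym1 - ym) / (xm1 - xm)))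
                  * (((t - xm) / (xm1 - xm)) * (1 - (t - xm) / (xm1 - xm)))))
        (((ym1 - ym) / (xm1 - xm)) ^ 2
            * (dm1 * ((x - xm) / (xm1 - xm)) ^ 2
                + 2 * ((ym1 - ym) / (xm1 - xm))
                  * (((x - xm) / (xm1 - xm)) * (1 - (x - xm) / (xm1 - xm)))
                + dm * (1 - (x - xm) / (xm1 - xm)) ^ 2)
            / ((ym1 - ym) / (xm1 - xm)
                + (dm1 + dm - 2 * ((ym1 - ym) / (xm1 - xm)))
                  * (((x - xm) / (xm1 - xm)) * (1 - (x - xm) / (xm1 - xm)))) ^ 2)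
        x := by
  rintro x ⟨hxm, hxm1⟩
  have hc : 0 < xm1 - xm := sub_pos.mpr hx
  have hs : 0 < (ym1 - ym) / (xm1 - xm) := div_pos (sub_pos.mpr hy) hc
  have hξ₀ : 0 ≤ (x - xm) / (xm1 - xm) := div_nonneg (by linarith) hc.le
  have hξ₁ : (x - xm) / (xm1 - xm) ≤ 1 := (div_le_one hc).mpr (by linarith)
  have hD := rqs_denominator_pos_s16 hs hdm.le hdm1.le hξ₀ hξ₁
  have hξ' : HasDerivAt (fun t => (t - xm) / (xm1 - xm)) (1 / (xm1 - xm)) x := by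
    simpa using ((hasDerivAt_id x).sub_const xm).div_const (xm1 - xm)
  simp only [mul_div_assoc]
  exact (((hasDerivAt_rqs_unit hD.ne').comp x hξ').const_mul (ym1 - ym)).const_add ym
    |>.congr_deriv (by ring)
end

section
/- Let x_m < x_{m+1} and y_m < y_{m+1} be real numbers and let y_m' > 0 and y_{m+1}' > 0. Set s = (y_{m+1} − y_m)/(x_{m+1} − x_m) and σ = y_{m+1}' + y_m' − 2s, and for x ∈ [x_m, x_{m+1}] set ξ = (x − x_m)/(x_{m+1} − x_m). Then the rational quadratic spline f(x) = y_m + (y_{m+1} − y_m)·(s·ξ² + y_m'·ξ(1−ξ))/(s + σ·ξ(1−ξ)) is strictly increasing on [x_m, x_{m+1}], with f(x_m) = y_m and f(x_{m+1}) = y_{m+1}; in particular f is a bijection from [x_m, x_{m+1}] onto [y_m, y_{m+1}]. -/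
/-!
On the unit interval the spline is `u ↦ N(u) / D(u)` with `N(u) = s u² + d₀ u (1 - u)` and
`D(u) = s + (d₁ + d₀ - 2s) u (1 - u) = s (u² + (1 - u)²) + (d₀ + d₁) u (1 - u) > 0`. The cross
difference `N(v) D(u) - N(u) D(v)` factors as `s (v - u) B(u, v)` with
`B(u, v) = s (u (1 - v) + v (1 - u)) + d₀ (1 - u)(1 - v) + d₁ u v > 0` for `0 ≤ u < v ≤ 1`, so the
spline is strictly increasing; it is continuous and fixes `0` and `1`, hence by the intermediate
value theorem a bijection of `[0, 1]`. The affine change of variables transports this to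
`[x_m, x_{m+1}] → [y_m, y_{m+1}]`.
-/

open Set

theorem StrictMonoOn.bijOn_Icc {α β : Type*} [ConditionallyCompleteLinearOrder α]
    [DenselyOrdered α] [TopologicalSpace α] [OrderTopology α] [LinearOrder β]
    [TopologicalSpace β] [OrderClosedTopology β] {f : α → β} {a b : α} (hab : a ≤ b)
    (hf : StrictMonoOn f (Icc a b)) (hc : ContinuousOn f (Icc a b)) :
    BijOn f (Icc a b) (Icc (f a) (f b)) :=
  ⟨hf.monotoneOn.mapsTo_Icc, hf.injOn,
    hc.surjOn_Icc (left_mem_Icc.mpr hab) (right_mem_Icc.mpr hab)⟩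

lemma sub_div_sub_mem_Icc_zero_one {a b t : ℝ} (ht : t ∈ Icc a b) :
    (t - a) / (b - a) ∈ Icc (0 : ℝ) 1 :=
  ⟨div_nonneg (by linarith [ht.1]) (by linarith [ht.1, ht.2]),
    div_le_one_of_le₀ (by linarith [ht.2]) (by linarith [ht.1, ht.2])⟩

section Rescale

variable {xm xm1 ym ym1 : ℝ} {g : ℝ → ℝ}

noncomputable def rescale (xm xm1 ym ym1 : ℝ) (g : ℝ → ℝ) (t : ℝ) : ℝ :=
  ym + (ym1 - ym) * g ((t - xm) / (xm1 - xm))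

theorem StrictMonoOn.rescale (hx : xm < xm1) (hy : ym < ym1) (hg : StrictMonoOn g (Icc 0 1)) :
    StrictMonoOn (rescale xm xm1 ym ym1 g) (Icc xm xm1) := by
  intro a ha b hb hab
  have hgab := hg (sub_div_sub_mem_Icc_zero_one ha) (sub_div_sub_mem_Icc_zero_one hb)
    (div_lt_div_of_pos_right (by linarith) (sub_pos.mpr hx))
  have hY : 0 < ym1 - ym := sub_pos.mpr hy
  simp only [_root_.rescale]
  gcongr

theorem ContinuousOn.rescale (hg : ContinuousOn g (Icc 0 1)) :
    ContinuousOn (rescale xm xm1 ym ym1 g) (Icc xm xm1) :=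
  continuousOn_const.add <| continuousOn_const.mul <|
    hg.comp (by fun_prop) fun _ ht ↦ sub_div_sub_mem_Icc_zero_one ht

lemma rescale_left (hg : g 0 = 0) : rescale xm xm1 ym ym1 g xm = ym := by
  simp [_root_.rescale, hg]

lemma rescale_right (hx : xm ≠ xm1) (hg : g 1 = 1) : rescale xm xm1 ym ym1 g xm1 = ym1 := by
  simp [_root_.rescale, div_self (sub_ne_zero.mpr hx.symm), hg]

end Rescale

section UnitSpline

variable {s d₀ d₁ u v : ℝ}

-- The spline on `[0, 1]`: `s` is the slope of the bin, `d₀` and `d₁` the end derivatives.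
def rqsDen (s d₀ d₁ u : ℝ) : ℝ := s + (d₁ + d₀ - 2 * s) * (u * (1 - u))

noncomputable def rqsUnit (s d₀ d₁ u : ℝ) : ℝ := (s * u ^ 2 + d₀ * (u * (1 - u))) / rqsDen s d₀ d₁ u

lemma rqsDen_pos (hs : 0 < s) (hd₀ : 0 ≤ d₀) (hd₁ : 0 ≤ d₁) (hu : u ∈ Icc (0 : ℝ) 1) :
    0 < rqsDen s d₀ d₁ u := by
  have hsq : 0 < u ^ 2 + (1 - u) ^ 2 := by nlinarith [sq_nonneg (2 * u - 1)]
  calc 0 < s * (u ^ 2 + (1 - u) ^ 2) + (d₀ + d₁) * (u * (1 - u)) :=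
        add_pos_of_pos_of_nonneg (mul_pos hs hsq)
          (mul_nonneg (by linarith) (mul_nonneg hu.1 (sub_nonneg.mpr hu.2)))
    _ = rqsDen s d₀ d₁ u := by unfold rqsDen; ring

lemma rqsUnit_sub_rqsUnit (hu : rqsDen s d₀ d₁ u ≠ 0) (hv : rqsDen s d₀ d₁ v ≠ 0) :
    rqsUnit s d₀ d₁ v - rqsUnit s d₀ d₁ u =
      s * (v - u) * (s * (u * (1 - v) + v * (1 - u)) + d₀ * ((1 - u) * (1 - v)) + d₁ * (u * v))
        / (rqsDen s d₀ d₁ v * rqsDen s d₀ d₁ u) := by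
  rw [rqsUnit, rqsUnit, div_sub_div _ _ hv hu]
  unfold rqsDen
  ring

lemma strictMonoOn_rqsUnit (hs : 0 < s) (hd₀ : 0 ≤ d₀) (hd₁ : 0 ≤ d₁) :
    StrictMonoOn (rqsUnit s d₀ d₁) (Icc 0 1) := by
  intro u hu v hv huv
  have hDu := rqsDen_pos hs hd₀ hd₁ hu
  have hDv := rqsDen_pos hs hd₀ hd₁ hv
  have hB : 0 < s * (u * (1 - v) + v * (1 - u)) + d₀ * ((1 - u) * (1 - v)) + d₁ * (u * v) := by
    have h1mu : 0 < 1 - u := by linarith [hv.2]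
    have h1mv : 0 ≤ 1 - v := by linarith [hv.2]
    have hv0 : 0 < v := by linarith [hu.1]
    have hu0 : 0 ≤ u := hu.1
    positivity
  rw [← sub_pos, rqsUnit_sub_rqsUnit hDu.ne' hDv.ne']
  exact div_pos (mul_pos (mul_pos hs (sub_pos.mpr huv)) hB) (mul_pos hDv hDu)

lemma continuousOn_rqsUnit (hs : 0 < s) (hd₀ : 0 ≤ d₀) (hd₁ : 0 ≤ d₁) :
    ContinuousOn (rqsUnit s d₀ d₁) (Icc 0 1) :=
  ContinuousOn.div (by fun_prop) (by unfold rqsDen; fun_prop)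
    fun _ hu ↦ (rqsDen_pos hs hd₀ hd₁ hu).ne'

lemma rqsUnit_zero : rqsUnit s d₀ d₁ 0 = 0 := by simp [rqsUnit]

lemma rqsUnit_one (hs : s ≠ 0) : rqsUnit s d₀ d₁ 1 = 1 := by simp [rqsUnit, rqsDen, hs]

end UnitSpline

/-- The monotonic rational quadratic spline
f(x) = y_m + (y_{m+1} − y_m)·(s·ξ² + y_m'·ξ(1−ξ))/(s + σ·ξ(1−ξ)), with
s = (y_{m+1} − y_m)/(x_{m+1} − x_m), σ = y_{m+1}' + y_m' − 2s and
ξ = (x − x_m)/(x_{m+1} − x_m), is strictly increasing on [x_m, x_{m+1}], maps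
x_m to y_m and x_{m+1} to y_{m+1}, and is a bijection from [x_m, x_{m+1}] onto
[y_m, y_{m+1}]. -/
theorem rqs_strictMono_bijOn (xm xm1 ym ym1 dm dm1 : ℝ)
    (hx : xm < xm1) (hy : ym < ym1) (hdm : 0 < dm) (hdm1 : 0 < dm1) :
    let f : ℝ → ℝ := fun t =>
      ym + (ym1 - ym)
        * (((ym1 - ym) / (xm1 - xm)) * ((t - xm) / (xm1 - xm)) ^ 2
            + dm * (((t - xm) / (xm1 - xm)) * (1 - (t - xm) / (xm1 - xm))))
        / ((ym1 - ym) / (xm1 - xm)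
            + (dm1 + dm - 2 * ((ym1 - ym) / (xm1 - xm)))
              * (((t - xm) / (xm1 - xm)) * (1 - (t - xm) / (xm1 - xm))))
    StrictMonoOn f (Set.Icc xm xm1) ∧ f xm = ym ∧ f xm1 = ym1 ∧
      Set.BijOn f (Set.Icc xm xm1) (Set.Icc ym ym1) := by
  intro f
  have hs : 0 < (ym1 - ym) / (xm1 - xm) := div_pos (sub_pos.mpr hy) (sub_pos.mpr hx)
  have hf : f = rescale xm xm1 ym ym1 (rqsUnit ((ym1 - ym) / (xm1 - xm)) dm dm1) := by
    funext t
    simp only [f, rescale, rqsUnit, rqsDen, mul_div_assoc]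
  have hmono := (strictMonoOn_rqsUnit hs hdm.le hdm1.le).rescale hx hy
  have hleft : f xm = ym := hf ▸ rescale_left rqsUnit_zero
  have hright : f xm1 = ym1 := hf ▸ rescale_right hx.ne (rqsUnit_one hs.ne')
  rw [← hf] at hmono
  refine ⟨hmono, hleft, hright, ?_⟩
  have hcont : ContinuousOn f (Icc xm xm1) :=
    hf ▸ (continuousOn_rqsUnit hs hdm.le hdm1.le).rescale
  simpa only [hleft, hright] using hmono.bijOn_Icc hx.le hcont
end
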